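/- Fix l > 0 and set w(θ) = 1 + l² cos²θ. Define on ℝ² the functions g₁₁(t,θ) = e^{−2t} w(θ), g₂₂(t,θ) = e^{−2t}, A₁₁(t,θ) = e^{−t} l cosθ √w, A₁₂(t,θ) = e^{−t} l sinθ / √w, A₂₂(t,θ) = e^{−t} l cosθ / √w, H(t,θ) = 2 e^{t} l cosθ / √w, the traceless second fundamental form entries Å₁₁ = A₁₁ − (H/2) g₁₁, Å₁₂ = Å₂₁ = A₁₂, Å₂₂ = A₂₂ − (H/2) g₂₂, its squared norm |Å|² = Å₁₁²/(g₁₁ g₁₁) + 2 Å₁₂²/(g₁₁ g₂₂) + Å₂₂²/(g₂₂ g₂₂), and the Laplace–Beltrami operator Δ_g h = (1/√(g₁₁ g₂₂)) [ ∂_t( (√(g₁₁ g₂₂)/g₁₁) ∂_t h ) + ∂_θ( (√(g₁₁ g₂₂)/g₂₂) ∂_θ h ) ]. Then the Willmore equation Δ_g H + |Å|² H = 0 holds at every point (t,θ) ∈ ℝ². -/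

import Mathlib

open Real

noncomputable section

/-- `w(θ) = 1 + l² cos² θ`. -/
def wFun (l : ℝ) (θ : ℝ) : ℝ := 1 + l ^ 2 * Real.cos θ ^ 2

/-- `g₁₁ = e^{-2t} w(θ)`. -/
def g11 (l : ℝ) (p : ℝ × ℝ) : ℝ := Real.exp (-(2 * p.1)) * wFun l p.2

/-- `g₂₂ = e^{-2t}`. -/
def g22 (l : ℝ) (p : ℝ × ℝ) : ℝ := Real.exp (-(2 * p.1))

/-- `A₁₁ = e^{-t} l cos θ √w`. -/
def A11 (l : ℝ) (p : ℝ × ℝ) : ℝ :=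
  Real.exp (-p.1) * l * Real.cos p.2 * Real.sqrt (wFun l p.2)

/-- `A₁₂ = e^{-t} l sin θ / √w`. -/
def A12 (l : ℝ) (p : ℝ × ℝ) : ℝ :=
  Real.exp (-p.1) * l * Real.sin p.2 / Real.sqrt (wFun l p.2)

/-- `A₂₂ = e^{-t} l cos θ / √w`. -/
def A22 (l : ℝ) (p : ℝ × ℝ) : ℝ :=
  Real.exp (-p.1) * l * Real.cos p.2 / Real.sqrt (wFun l p.2)

/-- `H = 2 e^{t} l cos θ / √w`. -/
def meanH (l : ℝ) (p : ℝ × ℝ) : ℝ :=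
  2 * Real.exp p.1 * l * Real.cos p.2 / Real.sqrt (wFun l p.2)

/-- Traceless second fundamental form, `Å₁₁ = A₁₁ - (H/2) g₁₁`. -/
def tA11 (l : ℝ) (p : ℝ × ℝ) : ℝ := A11 l p - meanH l p / 2 * g11 l p

/-- `Å₁₂ = A₁₂`. -/
def tA12 (l : ℝ) (p : ℝ × ℝ) : ℝ := A12 l p

/-- `Å₂₂ = A₂₂ - (H/2) g₂₂`. -/
def tA22 (l : ℝ) (p : ℝ × ℝ) : ℝ := A22 l p - meanH l p / 2 * g22 l p

/-- `|Å|² = Å₁₁²/(g₁₁g₁₁) + 2Å₁₂²/(g₁₁g₂₂) + Å₂₂²/(g₂₂g₂₂)`. -/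
def tANormSq (l : ℝ) (p : ℝ × ℝ) : ℝ :=
  tA11 l p ^ 2 / (g11 l p * g11 l p) + 2 * tA12 l p ^ 2 / (g11 l p * g22 l p) +
    tA22 l p ^ 2 / (g22 l p * g22 l p)

/-- The Laplace–Beltrami operator of the metric `diag(g₁₁, g₂₂)`. -/
def lapBel (l : ℝ) (h : ℝ × ℝ → ℝ) (p : ℝ × ℝ) : ℝ :=
  (1 / Real.sqrt (g11 l p * g22 l p)) *
    (deriv (fun s =>
        (Real.sqrt (g11 l (s, p.2) * g22 l (s, p.2)) / g11 l (s, p.2)) *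
          deriv (fun s' => h (s', p.2)) s) p.1 +
     deriv (fun s =>
        (Real.sqrt (g11 l (p.1, s) * g22 l (p.1, s)) / g22 l (p.1, s)) *
          deriv (fun s' => h (p.1, s')) s) p.2)


/-! Both diagonal entries of `Å` vanish, so `|Å|² = 2 e^{2t} l² sin² θ / w²` comes from `Å₁₂`
alone. The metric is `e^{-2t} diag(w, 1)` and `H = e^t k(θ)` with `k = 2 l cos θ / √w`; for such
a function `Δ_g H = e^{3t} (k / w + (√w k')' / √w)`. Here the flux is `√w k' = -2 l sin θ / w`,
and its `θ`-derivative divided by `√w` is exactly `-(k / w + e^{-2t} |Å|² k)`. -/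

lemma wFun_pos (l θ : ℝ) : 0 < wFun l θ := by
  unfold wFun; positivity

lemma sqrt_wFun_pos (l θ : ℝ) : 0 < √(wFun l θ) := sqrt_pos.2 (wFun_pos l θ)

lemma sq_sqrt_wFun (l θ : ℝ) : √(wFun l θ) ^ 2 = wFun l θ := sq_sqrt (wFun_pos l θ).le

lemma hasDerivAt_wFun (l θ : ℝ) :
    HasDerivAt (wFun l) (-2 * l ^ 2 * cos θ * sin θ) θ :=
  ((((hasDerivAt_cos θ).fun_pow 2).const_mul (l ^ 2)).const_add 1).congr_deriv (by ring)

lemma exp_neg_two_mul (t : ℝ) : exp (-(2 * t)) = exp (-t) ^ 2 := by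
  rw [← exp_nat_mul]; ring_nf

lemma exp_eq_inv_exp_neg (t : ℝ) : exp t = (exp (-t))⁻¹ := by
  rw [exp_neg, inv_inv]

lemma sqrt_g11_mul_g22 (l : ℝ) (p : ℝ × ℝ) :
    √(g11 l p * g22 l p) = exp (-(2 * p.1)) * √(wFun l p.2) := by
  rw [g11, g22, show exp (-(2 * p.1)) * wFun l p.2 * exp (-(2 * p.1)) =
    exp (-(2 * p.1)) ^ 2 * wFun l p.2 by ring, sqrt_mul (sq_nonneg _), sqrt_sq (exp_pos _).le]

lemma sqrt_g11_mul_g22_div_g11 (l : ℝ) (p : ℝ × ℝ) :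
    √(g11 l p * g22 l p) / g11 l p = (√(wFun l p.2))⁻¹ := by
  have := wFun_pos l p.2
  have := sqrt_wFun_pos l p.2
  rw [sqrt_g11_mul_g22, g11]
  field_simp
  rw [sq_sqrt_wFun]

lemma sqrt_g11_mul_g22_div_g22 (l : ℝ) (p : ℝ × ℝ) :
    √(g11 l p * g22 l p) / g22 l p = √(wFun l p.2) := by
  rw [sqrt_g11_mul_g22, g22]
  field_simp

lemma lapBel_exp_mul (l : ℝ) {k k' : ℝ → ℝ} {m : ℝ} (t θ : ℝ)
    (hk : ∀ θ, HasDerivAt k (k' θ) θ)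
    (hm : HasDerivAt (fun θ => √(wFun l θ) * k' θ) m θ) :
    lapBel l (fun p => exp p.1 * k p.2) (t, θ) =
      exp (3 * t) * (k θ / wFun l θ + m / √(wFun l θ)) := by
  have flux_t : (fun s => √(g11 l (s, θ) * g22 l (s, θ)) / g11 l (s, θ) *
      deriv (fun s' => exp s' * k θ) s) = fun s => exp s * (k θ / √(wFun l θ)) := by
    funext s
    rw [sqrt_g11_mul_g22_div_g11, ((hasDerivAt_exp s).mul_const (k θ)).deriv]
    ring
  have flux_θ : (fun s => √(g11 l (t, s) * g22 l (t, s)) / g22 l (t, s) *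
      deriv (fun s' => exp t * k s') s) = fun s => exp t * (√(wFun l s) * k' s) := by
    funext s
    rw [sqrt_g11_mul_g22_div_g22, ((hk s).const_mul (exp t)).deriv]
    ring
  rw [lapBel, flux_t, flux_θ, ((hasDerivAt_exp t).mul_const _).deriv, (hm.const_mul _).deriv,
    sqrt_g11_mul_g22]
  dsimp only
  rw [exp_neg_two_mul, exp_eq_inv_exp_neg (3 * t), show -(3 * t) = (3 : ℕ) * -t by push_cast; ring,
    exp_nat_mul, exp_eq_inv_exp_neg t]
  have := wFun_pos l θ
  have := sqrt_wFun_pos l θ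
  field_simp
  linear_combination (-k θ) * sq_sqrt_wFun l θ

lemma tA11_eq_zero (l : ℝ) (p : ℝ × ℝ) : tA11 l p = 0 := by
  have := sqrt_wFun_pos l p.2
  rw [tA11, A11, meanH, g11, exp_neg_two_mul, exp_eq_inv_exp_neg p.1]
  field_simp
  linear_combination l * cos p.2 * exp (-p.1) * sq_sqrt_wFun l p.2

lemma tA22_eq_zero (l : ℝ) (p : ℝ × ℝ) : tA22 l p = 0 := by
  rw [tA22, A22, meanH, g22, exp_neg_two_mul, exp_eq_inv_exp_neg p.1]
  field_simp
  ring

lemma tANormSq_eq (l : ℝ) (p : ℝ × ℝ) :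
    tANormSq l p = 2 * exp (2 * p.1) * l ^ 2 * sin p.2 ^ 2 / wFun l p.2 ^ 2 := by
  have := sqrt_wFun_pos l p.2
  rw [tANormSq, tA11_eq_zero, tA22_eq_zero, tA12, A12, g11, g22, exp_neg_two_mul,
    exp_eq_inv_exp_neg (2 * p.1), exp_neg_two_mul]
  field_simp
  rw [sq_sqrt_wFun]
  ring

lemma meanH_eq_exp_mul (l : ℝ) :
    meanH l = fun p => exp p.1 * (2 * l * cos p.2 / √(wFun l p.2)) := by
  funext p
  rw [meanH]
  ring

lemma hasDerivAt_cos_div_sqrt_wFun (l θ : ℝ) :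
    HasDerivAt (fun θ => 2 * l * cos θ / √(wFun l θ))
      (-2 * l * sin θ / (wFun l θ * √(wFun l θ))) θ := by
  have := wFun_pos l θ
  have hsw := sqrt_wFun_pos l θ
  refine (((hasDerivAt_cos θ).const_mul (2 * l)).div
    ((hasDerivAt_wFun l θ).sqrt (wFun_pos l θ).ne') hsw.ne').congr_deriv ?_
  field_simp
  rw [sq_sqrt_wFun, wFun]
  ring

lemma sqrt_wFun_mul_eq (l : ℝ) :
    (fun θ => √(wFun l θ) * (-2 * l * sin θ / (wFun l θ * √(wFun l θ)))) =
      fun θ => -2 * l * sin θ / wFun l θ := by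
  funext θ
  have := sqrt_wFun_pos l θ
  field_simp

theorem stmt19_general (l : ℝ) :
    ∀ p : ℝ × ℝ, lapBel l (meanH l) p + tANormSq l p * meanH l p = 0 := by
  rintro ⟨t, θ⟩
  have hflux : HasDerivAt (fun θ => √(wFun l θ) * (-2 * l * sin θ / (wFun l θ * √(wFun l θ))))
      ((-2 * l * cos θ * wFun l θ - -2 * l * sin θ * (-2 * l ^ 2 * cos θ * sin θ)) /
        wFun l θ ^ 2) θ := by
    rw [sqrt_wFun_mul_eq]
    exact ((hasDerivAt_sin θ).const_mul (-2 * l)).div (hasDerivAt_wFun l θ) (wFun_pos l θ).ne'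
  rw [meanH_eq_exp_mul, lapBel_exp_mul l t θ (hasDerivAt_cos_div_sqrt_wFun l) hflux, tANormSq_eq]
  have := wFun_pos l θ
  have := sqrt_wFun_pos l θ
  rw [show 3 * t = 2 * t + t by ring, exp_add]
  field_simp
  ring

/-- The explicit surface `f(t,θ) = (e^{-t}cos(lt)cos θ, e^{-t}sin θ, e^{-t}sin(lt)cos θ)`
is Willmore: `Δ_g H + |Å|² H = 0` (Section 6.1). -/
theorem stmt19 (l : ℝ) (hl : 0 < l) :
    ∀ p : ℝ × ℝ, lapBel l (meanH l) p + tANormSq l p * meanH l p = 0 :=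
  stmt19_general l

end
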